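/- arXiv:1307.7069 — 2 statements merged into one kernel-verified Lean document; each statement's English description precedes it below -/
import Mathlib

section
/- Let 0 < θ ≤ 1, P₁ ≥ 1 and y ∈ ℤ^{n₂}, and assume P₁^{−d₁ + 3Rθ(d₁−1)} |y|^{(3R−1)d₂} < 1. Then the major arcs 𝔐'^y_{a,q}(θ), taken over all 1 ≤ q ≤ P₁^{Rθ(d₁−1)}|y|^{Rd₂} and all tuples (a₁,…,a_R) with 0 ≤ a_i < q and gcd(q, a₁, …, a_R) = 1, are pairwise disjoint. -/
/-! If `α` lies on the arcs around `a/q` and `a'/q'`, then `|q'a_i − qa'_i| ≤ q q' Δ` with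
`Δ = P₁^{−d₁+Rθ(d₁−1)} |y|^{(R−1)d₂}`, and `q, q' ≤ P₁^{Rθ(d₁−1)} |y|^{Rd₂}` turns the hypothesis
into `q q' Δ < 1`. Hence `q'a = qa'`, and two vectors of fractions in lowest terms that agree
have the same denominator and numerators. -/

open scoped BigOperators Pointwise
open MeasureTheory Filter Asymptotics

noncomputable section

namespace BiprojCM

/-- `e(t) = exp(2πit)`. -/
def eAdd (t : ℝ) : ℂ := Complex.exp (2 * Real.pi * Complex.I * t)

/-- Sup-norm `max_i |x_i|` of an integer vector, as a real number. -/
def mnorm {n : ℕ} (x : Fin n → ℤ) : ℝ := ‖fun i => (x i : ℝ)‖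

open Classical in
/-- Dimension of a subset of the affine space `σ → ℂ`: the Krull dimension of its
coordinate ring (the empty set having dimension `-1`). -/
def affDim {σ : Type} (S : Set (σ → ℂ)) : ℤ :=
  if S = ∅ then -1
  else (ENat.toNat ((ringKrullDim (MvPolynomial σ ℂ ⧸ MvPolynomial.vanishingIdeal ℂ S)).unbotD 0) : ℤ)

variable {n₁ n₂ R : ℕ}

/-- Evaluation of an integral polynomial in the variables `(x; y)` at integer points. -/
def evalZ (F : MvPolynomial (Fin n₁ ⊕ Fin n₂) ℤ) (x : Fin n₁ → ℤ) (y : Fin n₂ → ℤ) : ℤ :=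
  MvPolynomial.eval (Sum.elim x y) F

/-- Evaluation at real points. -/
def evalR (F : MvPolynomial (Fin n₁ ⊕ Fin n₂) ℤ) (v : Fin n₁ → ℝ) (w : Fin n₂ → ℝ) : ℝ :=
  MvPolynomial.eval₂ (Int.castRingHom ℝ) (Sum.elim v w) F

/-- Evaluation at complex points. -/
def evalC (F : MvPolynomial (Fin n₁ ⊕ Fin n₂) ℤ) (x : Fin n₁ → ℂ) (y : Fin n₂ → ℂ) : ℂ :=
  MvPolynomial.eval₂ (Int.castRingHom ℂ) (Sum.elim x y) F

/-- `F` is bihomogeneous of bidegree `(d₁, d₂)`. -/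
def Bihomog (d₁ d₂ : ℕ) (F : MvPolynomial (Fin n₁ ⊕ Fin n₂) ℤ) : Prop :=
  ∀ (a b : ℂ) (x : Fin n₁ → ℂ) (y : Fin n₂ → ℂ),
    evalC F (fun i => a * x i) (fun j => b * y j) = a ^ d₁ * b ^ d₂ * evalC F x y

/-- The Jacobian matrix `(∂F_i/∂x_j)_{i,j}` evaluated at a complex point. -/
def jacX (F : Fin R → MvPolynomial (Fin n₁ ⊕ Fin n₂) ℤ) (x : Fin n₁ → ℂ) (y : Fin n₂ → ℂ) :
    Matrix (Fin R) (Fin n₁) ℂ :=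
  Matrix.of fun i j => evalC (MvPolynomial.pderiv (Sum.inl j) (F i)) x y

/-- The Jacobian matrix `(∂F_i/∂y_j)_{i,j}` evaluated at a complex point. -/
def jacY (F : Fin R → MvPolynomial (Fin n₁ ⊕ Fin n₂) ℤ) (x : Fin n₁ → ℂ) (y : Fin n₂ → ℂ) :
    Matrix (Fin R) (Fin n₂) ℂ :=
  Matrix.of fun i j => evalC (MvPolynomial.pderiv (Sum.inr j) (F i)) x y

/-- The affine variety `V₁* ⊆ 𝔸_ℂ^{n₁+n₂}` given by `rank (∂F_i/∂x_j) < R`. -/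
def V1star (F : Fin R → MvPolynomial (Fin n₁ ⊕ Fin n₂) ℤ) : Set (Fin n₁ ⊕ Fin n₂ → ℂ) :=
  {p | (jacX F (fun i => p (Sum.inl i)) (fun j => p (Sum.inr j))).rank < R}

/-- The affine variety `V₂* ⊆ 𝔸_ℂ^{n₁+n₂}` given by `rank (∂F_i/∂y_j) < R`. -/
def V2star (F : Fin R → MvPolynomial (Fin n₁ ⊕ Fin n₂) ℤ) : Set (Fin n₁ ⊕ Fin n₂ → ℂ) :=
  {p | (jacY F (fun i => p (Sum.inl i)) (fun j => p (Sum.inr j))).rank < R}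

/-- For fixed `y`, the variety `V₁,y* ⊆ 𝔸_ℂ^{n₁}`. -/
def V1y (F : Fin R → MvPolynomial (Fin n₁ ⊕ Fin n₂) ℤ) (y : Fin n₂ → ℂ) :
    Set (Fin n₁ → ℂ) :=
  {x | (jacX F x y).rank < R}

/-- For fixed `x`, the variety `V₂,x* ⊆ 𝔸_ℂ^{n₂}`. -/
def V2x (F : Fin R → MvPolynomial (Fin n₁ ⊕ Fin n₂) ℤ) (x : Fin n₁ → ℂ) :
    Set (Fin n₂ → ℂ) :=
  {y | (jacY F x y).rank < R}

/-- `𝒜₁(ℤ) = {y ∈ ℤ^{n₂} : dim V₁,y* < dim V₁* − n₂ + λ}`. -/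
def A1Z (F : Fin R → MvPolynomial (Fin n₁ ⊕ Fin n₂) ℤ) (lam : ℕ) : Set (Fin n₂ → ℤ) :=
  {y | affDim (V1y F fun j => (y j : ℂ)) < affDim (V1star F) - n₂ + lam}

/-- `𝒜₂(ℤ) = {x ∈ ℤ^{n₁} : dim V₂,x* < dim V₂* − n₁ + λ₂}`. -/
def A2Z (F : Fin R → MvPolynomial (Fin n₁ ⊕ Fin n₂) ℤ) (lam : ℕ) : Set (Fin n₁ → ℤ) :=
  {x | affDim (V2x F fun i => (x i : ℂ)) < affDim (V2star F) - n₁ + lam}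

/-- A box in `ℝ^n`: a product of bounded intervals. -/
def IsBox {n : ℕ} (B : Set (Fin n → ℝ)) : Prop :=
  ∃ a b : Fin n → ℝ, B = {v | ∀ i, v i ∈ Set.Icc (a i) (b i)}

/-- Integer points of the dilated box `P • B`. -/
def intBox {n : ℕ} (B : Set (Fin n → ℝ)) (P : ℝ) : Set (Fin n → ℤ) :=
  {x | (fun i => (x i : ℝ)) ∈ P • B}

/-- `N_y(P₁)`: the number of integer points `x ∈ P₁ℬ₁` with `F_i(x; y) = 0` for all `i`. -/
def Ny (F : Fin R → MvPolynomial (Fin n₁ ⊕ Fin n₂) ℤ) (B₁ : Set (Fin n₁ → ℝ))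
    (y : Fin n₂ → ℤ) (P₁ : ℝ) : ℕ :=
  Set.ncard {x : Fin n₁ → ℤ | x ∈ intBox B₁ P₁ ∧ ∀ i, evalZ (F i) x y = 0}

/-- `N₁(P₁, P₂) = Σ_{y ∈ P₂ℬ₂ ∩ 𝒜₁(ℤ)} N_y(P₁)` as a count of pairs. -/
def N1 (F : Fin R → MvPolynomial (Fin n₁ ⊕ Fin n₂) ℤ) (B₁ : Set (Fin n₁ → ℝ))
    (B₂ : Set (Fin n₂ → ℝ)) (lam : ℕ) (P₁ P₂ : ℝ) : ℕ :=
  Set.ncard {p : (Fin n₁ → ℤ) × (Fin n₂ → ℤ) |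
    p.1 ∈ intBox B₁ P₁ ∧ p.2 ∈ intBox B₂ P₂ ∧ p.2 ∈ A1Z F lam ∧
    ∀ i, evalZ (F i) p.1 p.2 = 0}

/-- `N₂(P₁, P₂)`, with the roles of `x` and `y` interchanged. -/
def N2 (F : Fin R → MvPolynomial (Fin n₁ ⊕ Fin n₂) ℤ) (B₁ : Set (Fin n₁ → ℝ))
    (B₂ : Set (Fin n₂ → ℝ)) (lam₂ : ℕ) (P₁ P₂ : ℝ) : ℕ :=
  Set.ncard {p : (Fin n₁ → ℤ) × (Fin n₂ → ℤ) |
    p.1 ∈ intBox B₁ P₁ ∧ p.2 ∈ intBox B₂ P₂ ∧ p.1 ∈ A2Z F lam₂ ∧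
    ∀ i, evalZ (F i) p.1 p.2 = 0}

/-- `N_U(P₁, P₂)`: integer points of `U = U₁ × U₂` in the dilated boxes solving the system. -/
def NU (F : Fin R → MvPolynomial (Fin n₁ ⊕ Fin n₂) ℤ) (B₁ : Set (Fin n₁ → ℝ))
    (B₂ : Set (Fin n₂ → ℝ)) (lam₁ lam₂ : ℕ) (P₁ P₂ : ℝ) : ℕ :=
  Set.ncard {p : (Fin n₁ → ℤ) × (Fin n₂ → ℤ) |
    p.1 ∈ intBox B₁ P₁ ∧ p.2 ∈ intBox B₂ P₂ ∧
    p.1 ∈ A2Z F lam₂ ∧ p.2 ∈ A1Z F lam₁ ∧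
    ∀ i, evalZ (F i) p.1 p.2 = 0}

/-- The exponential sum `S_y(α) = Σ_{x ∈ P₁ℬ₁ ∩ ℤ^{n₁}} e(Σ_i α_i F_i(x; y))`. -/
def Sexp (F : Fin R → MvPolynomial (Fin n₁ ⊕ Fin n₂) ℤ) (B₁ : Set (Fin n₁ → ℝ))
    (P₁ : ℝ) (y : Fin n₂ → ℤ) (α : Fin R → ℝ) : ℂ :=
  ∑' x : ↥(intBox B₁ P₁), eAdd (∑ i, α i * (evalZ (F i) (x : Fin n₁ → ℤ) y : ℝ))

/-- The complete exponential sum `S_{a,q}(y) = Σ_{z mod q} e(Σ_i (a_i/q) F_i(z; y))`. -/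
def Saq (F : Fin R → MvPolynomial (Fin n₁ ⊕ Fin n₂) ℤ) (q : ℕ) (a : Fin R → ℤ)
    (y : Fin n₂ → ℤ) : ℂ :=
  ∑ z : Fin n₁ → Fin q,
    eAdd (∑ i, (a i : ℝ) / q * (evalZ (F i) (fun j => ((z j : ℕ) : ℤ)) y : ℝ))

/-- The `q`-th term of the singular series `𝔖_y`. -/
def SStermY (F : Fin R → MvPolynomial (Fin n₁ ⊕ Fin n₂) ℤ) (y : Fin n₂ → ℤ) (q : ℕ) : ℂ :=
  ((q : ℂ) ^ n₁)⁻¹ * ∑ a : Fin R → Fin q,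
    if Nat.gcd q (Finset.univ.gcd fun i => (a i : ℕ)) = 1
    then Saq F q (fun i => ((a i : ℕ) : ℤ)) y else 0

/-- The singular series `𝔖_y`. -/
def SSy (F : Fin R → MvPolynomial (Fin n₁ ⊕ Fin n₂) ℤ) (y : Fin n₂ → ℤ) : ℂ :=
  ∑' q : ℕ, SStermY F y q

/-- The truncated singular series `𝔖_y(t) = Σ_{q ≤ t} q^{-n₁} Σ_a S_{a,q}(y)`. -/
def SSyT (F : Fin R → MvPolynomial (Fin n₁ ⊕ Fin n₂) ℤ) (y : Fin n₂ → ℤ) (t : ℝ) : ℂ :=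
  ∑ q ∈ Finset.Icc 1 ⌊t⌋₊, SStermY F y q

/-- The integral `I_y(β) = ∫_{v ∈ ℬ₁} e(Σ_i β_i F_i(v; y)) dv`. -/
def Iy (F : Fin R → MvPolynomial (Fin n₁ ⊕ Fin n₂) ℤ) (B₁ : Set (Fin n₁ → ℝ))
    (y : Fin n₂ → ℤ) (β : Fin R → ℝ) : ℂ :=
  ∫ v in B₁, eAdd (∑ i, β i * evalR (F i) v (fun j => (y j : ℝ)))

/-- The singular integral `J_y = ∫_{ℝ^R} I_y(β) dβ`. -/
def Jy (F : Fin R → MvPolynomial (Fin n₁ ⊕ Fin n₂) ℤ) (B₁ : Set (Fin n₁ → ℝ))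
    (y : Fin n₂ → ℤ) : ℂ :=
  ∫ β : Fin R → ℝ, Iy F B₁ y β

/-- The truncated singular integral `J_y(t) = ∫_{|β| ≤ t} I_y(β) dβ`. -/
def JyT (F : Fin R → MvPolynomial (Fin n₁ ⊕ Fin n₂) ℤ) (B₁ : Set (Fin n₁ → ℝ))
    (y : Fin n₂ → ℤ) (t : ℝ) : ℂ :=
  ∫ β in {β : Fin R → ℝ | ∀ i, |β i| ≤ t}, Iy F B₁ y β

/-- The symmetric complete exponential sum `S_{a,q}(x)`. -/
def SaqX (F : Fin R → MvPolynomial (Fin n₁ ⊕ Fin n₂) ℤ) (q : ℕ) (a : Fin R → ℤ)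
    (x : Fin n₁ → ℤ) : ℂ :=
  ∑ z : Fin n₂ → Fin q,
    eAdd (∑ i, (a i : ℝ) / q * (evalZ (F i) x (fun j => ((z j : ℕ) : ℤ)) : ℝ))

/-- The `q`-th term of the singular series `𝔖_x`. -/
def SStermX (F : Fin R → MvPolynomial (Fin n₁ ⊕ Fin n₂) ℤ) (x : Fin n₁ → ℤ) (q : ℕ) : ℂ :=
  ((q : ℂ) ^ n₂)⁻¹ * ∑ a : Fin R → Fin q,
    if Nat.gcd q (Finset.univ.gcd fun i => (a i : ℕ)) = 1
    then SaqX F q (fun i => ((a i : ℕ) : ℤ)) x else 0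

/-- The singular series `𝔖_x`. -/
def SSx (F : Fin R → MvPolynomial (Fin n₁ ⊕ Fin n₂) ℤ) (x : Fin n₁ → ℤ) : ℂ :=
  ∑' q : ℕ, SStermX F x q

/-- The integral `I_x(β) = ∫_{w ∈ ℬ₂} e(Σ_i β_i F_i(x; w)) dw`. -/
def Ix (F : Fin R → MvPolynomial (Fin n₁ ⊕ Fin n₂) ℤ) (B₂ : Set (Fin n₂ → ℝ))
    (x : Fin n₁ → ℤ) (β : Fin R → ℝ) : ℂ :=
  ∫ w in B₂, eAdd (∑ i, β i * evalR (F i) (fun i' => (x i' : ℝ)) w)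

/-- The singular integral `J_x = ∫_{ℝ^R} I_x(β) dβ`. -/
def Jx (F : Fin R → MvPolynomial (Fin n₁ ⊕ Fin n₂) ℤ) (B₂ : Set (Fin n₂ → ℝ))
    (x : Fin n₁ → ℤ) : ℂ :=
  ∫ β : Fin R → ℝ, Ix F B₂ x β

/-- The complete exponential sum of the whole system in all `n₁ + n₂` variables. -/
def SaqAll (F : Fin R → MvPolynomial (Fin n₁ ⊕ Fin n₂) ℤ) (q : ℕ) (a : Fin R → ℤ) : ℂ :=
  ∑ z : (Fin n₁ ⊕ Fin n₂) → Fin q,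
    eAdd (∑ i, (a i : ℝ) / q * (MvPolynomial.eval (fun j => ((z j : ℕ) : ℤ)) (F i) : ℝ))

/-- The `q`-th term of the singular series of the whole system. -/
def SStermAll (F : Fin R → MvPolynomial (Fin n₁ ⊕ Fin n₂) ℤ) (q : ℕ) : ℂ :=
  ((q : ℂ) ^ (n₁ + n₂))⁻¹ * ∑ a : Fin R → Fin q,
    if Nat.gcd q (Finset.univ.gcd fun i => (a i : ℕ)) = 1
    then SaqAll F q (fun i => ((a i : ℕ) : ℤ)) else 0

/-- The singular series `𝔖` of the system. -/
def SSall (F : Fin R → MvPolynomial (Fin n₁ ⊕ Fin n₂) ℤ) : ℂ :=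
  ∑' q : ℕ, SStermAll F q

/-- The singular integral `J` of the system, taken with respect to the box
`[-1,1]^{n₁+n₂}`. -/
def SIall (F : Fin R → MvPolynomial (Fin n₁ ⊕ Fin n₂) ℤ) : ℂ :=
  ∫ β : Fin R → ℝ,
    ∫ v in {v : Fin n₁ ⊕ Fin n₂ → ℝ | ∀ j, v j ∈ Set.Icc (-1 : ℝ) 1},
      eAdd (∑ i, β i * MvPolynomial.eval₂ (Int.castRingHom ℝ) v (F i))

/-- `σ`: the product of the circle-method singular series and singular integral. -/
def sigmaC (F : Fin R → MvPolynomial (Fin n₁ ⊕ Fin n₂) ℤ) : ℂ := SSall F * SIall F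

/-- The quantity `g₁(u, δ)`. -/
def g1 (R d₁ d₂ : ℕ) (u δ : ℝ) : ℝ :=
  (1 - u * d₂ * (2 * (R : ℝ) ^ 2 + 3 * R) - δ)⁻¹ *
    ((2 * (R : ℝ) + 3) * R * ((d₁ : ℝ) - 1)) * (u * d₂ * R * (2 * (R : ℝ) + 1) + 2 * δ)

/-- The quantity `g₂(u, δ)`. -/
def g2 (R d₁ d₂ : ℕ) (u δ : ℝ) : ℝ :=
  (u - (d₁ : ℝ) * (2 * (R : ℝ) ^ 2 + 3 * R) - u * δ)⁻¹ *
    ((2 * (R : ℝ) + 3) * R * ((d₂ : ℝ) - 1)) * ((d₁ : ℝ) * R * (2 * (R : ℝ) + 1) + 2 * u * δ)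

/-- The defining equation for `b₁`. -/
def b1Eq (R d₁ d₂ : ℕ) (δ b₁ : ℝ) : Prop :=
  (2 : ℝ) ^ (d₁ + d₂ - 2) * R * (b₁ * d₁ + d₂) =
    (2 : ℝ) ^ (d₁ - 1) * (g1 R d₁ d₂ (1 / b₁) δ + R * ((R : ℝ) + 1) * ((d₁ : ℝ) - 1)) +
      (⌈(R : ℝ) * (b₁ * d₁ + d₂) + δ⌉ : ℤ)

/-- The defining equation for `b₂`. -/
def b2Eq (R d₁ d₂ : ℕ) (δ b₂ : ℝ) : Prop :=
  (2 : ℝ) ^ (d₁ + d₂ - 2) * R * (b₂ * d₂ + d₁) =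
    (2 : ℝ) ^ (d₂ - 1) * (g2 R d₁ d₂ b₂ δ + R * ((R : ℝ) + 1) * ((d₂ : ℝ) - 1)) +
      (⌈(R : ℝ) * (b₂ * d₂ + d₁) + δ⌉ : ℤ)

/-- The conclusion of the Weyl-type lemma (Lemma 5.3 of the paper), for a constant `C₃`. -/
def WeylProp (F : Fin R → MvPolynomial (Fin n₁ ⊕ Fin n₂) ℤ) (B₁ : Set (Fin n₁ → ℝ))
    (d₁ d₂ : ℕ) (lam : ℕ) (K₁ ε C₃ : ℝ) : Prop :=
  ∀ θ : ℝ, 0 < θ → θ ≤ 1 → ∀ P₁ : ℝ, 1 ≤ P₁ → C₃ < P₁ ^ θ →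
    ∀ y ∈ A1Z F lam, ∀ α : Fin R → ℝ,
      ‖Sexp F B₁ P₁ y α‖ < P₁ ^ ((n₁ : ℝ) - K₁ * θ + ε) ∨
      ∃ q : ℕ, 1 ≤ q ∧
        (q : ℝ) ≤ P₁ ^ ((R : ℝ) * θ * ((d₁ : ℝ) - 1)) * mnorm y ^ (R * d₂) ∧
        ∃ a : Fin R → ℤ,
          Nat.gcd q (Finset.univ.gcd fun i => (a i).natAbs) = 1 ∧
          ∀ i, 2 * |(q : ℝ) * α i - (a i : ℝ)| ≤
            P₁ ^ (-(d₁ : ℝ) + (R : ℝ) * θ * ((d₁ : ℝ) - 1)) * mnorm y ^ ((R - 1) * d₂)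

/-- The (enlarged) major arc `𝔐'^y_{a,q}(θ)`. -/
def majorArc' (d₁ d₂ : ℕ) (P₁ θ : ℝ) (y : Fin n₂ → ℤ) (q : ℕ) (a : Fin R → ℤ) :
    Set (Fin R → ℝ) :=
  {α | (∀ i, α i ∈ Set.Icc (0 : ℝ) 1) ∧
    ∀ i, 2 * |(q : ℝ) * α i - (a i : ℝ)| ≤
      (q : ℝ) * P₁ ^ (-(d₁ : ℝ) + (R : ℝ) * θ * ((d₁ : ℝ) - 1)) * mnorm y ^ ((R - 1) * d₂)}


/-- Condition (I) for an arithmetical function `h`. -/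
def CondI (h : ℕ → ℕ → ℝ) (C δ β₁ β₂ : ℝ) : Prop :=
  ∃ K > (0 : ℝ), ∀ L M : ℝ, 1 ≤ L → 1 ≤ M →
    |(∑ l ∈ Finset.Icc 1 ⌊L⌋₊, ∑ m ∈ Finset.Icc 1 ⌊M⌋₊, h l m) - C * L ^ β₁ * M ^ β₂| ≤
      K * L ^ β₁ * M ^ β₂ * (min L M) ^ (-δ)

/-- Condition (II) for an arithmetical function `h`, with given `c₁`, `c₂`. -/
def CondII (h : ℕ → ℕ → ℝ) (δ β₁ β₂ ν D : ℝ) (c₁ c₂ : ℕ → ℝ) : Prop :=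
  (∃ K > (0 : ℝ), ∀ (L : ℝ) (m : ℕ), 1 ≤ L → 1 ≤ m → (m : ℝ) ≤ L ^ ν →
    |(∑ l ∈ Finset.Icc 1 ⌊L⌋₊, h l m) - c₁ m * L ^ β₁| ≤ K * (m : ℝ) ^ D * L ^ (β₁ - δ)) ∧
  (∃ K > (0 : ℝ), ∀ (M : ℝ) (l : ℕ), 1 ≤ M → 1 ≤ l → (l : ℝ) ≤ M ^ ν →
    |(∑ m ∈ Finset.Icc 1 ⌊M⌋₊, h l m) - c₂ l * M ^ β₂| ≤ K * (l : ℝ) ^ D * M ^ (β₂ - δ))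

open Classical in
/-- `Υ_h(P) = Σ_{l^{β₁} m^{β₂} ≤ P} h(l, m)`, the sum over pairs of positive integers. -/
def Upsilon (h : ℕ → ℕ → ℝ) (β₁ β₂ : ℝ) (P : ℝ) : ℝ :=
  ∑' p : ℕ × ℕ,
    if 1 ≤ p.1 ∧ 1 ≤ p.2 ∧ (p.1 : ℝ) ^ β₁ * (p.2 : ℝ) ^ β₂ ≤ P then h p.1 p.2 else 0

open Classical in
/-- `T₁ = Σ_{l ≤ P^μ} Σ_{P^{1/2} < m^{β₂} ≤ P l^{−β₁}} h(l, m)`. -/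
def T1 (h : ℕ → ℕ → ℝ) (β₁ β₂ μ : ℝ) (P : ℝ) : ℝ :=
  ∑ l ∈ Finset.Icc 1 ⌊P ^ μ⌋₊, ∑' m : ℕ,
    if P ^ ((1 : ℝ) / 2) < (m : ℝ) ^ β₂ ∧ (m : ℝ) ^ β₂ ≤ P * (l : ℝ) ^ (-β₁)
    then h l m else 0

open Classical in
/-- `T₂ = Σ_{P^μ < l ≤ P^{1/(2β₁)}} Σ_{P^{1/2} < m^{β₂} ≤ P l^{−β₁}} h(l, m)`. -/
def T2 (h : ℕ → ℕ → ℝ) (β₁ β₂ μ : ℝ) (P : ℝ) : ℝ :=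
  ∑ l ∈ Finset.Ioc ⌊P ^ μ⌋₊ ⌊P ^ (1 / (2 * β₁))⌋₊, ∑' m : ℕ,
    if P ^ ((1 : ℝ) / 2) < (m : ℝ) ^ β₂ ∧ (m : ℝ) ^ β₂ ≤ P * (l : ℝ) ^ (-β₁)
    then h l m else 0

variable {n₁ n₂ : ℕ}

/-- A primitive integer vector. -/
def primitive {n : ℕ} (x : Fin n → ℤ) : Prop :=
  Finset.univ.gcd (fun i => (x i).natAbs) = 1

/- ℂ-coefficient versions -/
/-- Evaluation of a complex polynomial in the variables `(x; y)`. -/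
def evalCC (F : MvPolynomial (Fin n₁ ⊕ Fin n₂) ℂ) (x : Fin n₁ → ℂ) (y : Fin n₂ → ℂ) : ℂ :=
  MvPolynomial.eval (Sum.elim x y) F

/-- `F ∈ ℂ[x; y]` is bihomogeneous of bidegree `(d₁, d₂)`. -/
def BihomogC (d₁ d₂ : ℕ) (F : MvPolynomial (Fin n₁ ⊕ Fin n₂) ℂ) : Prop :=
  ∀ (a b : ℂ) (x : Fin n₁ → ℂ) (y : Fin n₂ → ℂ),
    evalCC F (fun i => a * x i) (fun j => b * y j) = a ^ d₁ * b ^ d₂ * evalCC F x y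

/-- The locus `V₁* ⊆ 𝔸_ℂ^{n₁+n₂}` where all `∂F/∂x_j` vanish (case `R = 1`). -/
def V1starC (F : MvPolynomial (Fin n₁ ⊕ Fin n₂) ℂ) : Set (Fin n₁ ⊕ Fin n₂ → ℂ) :=
  {p | ∀ j : Fin n₁, MvPolynomial.eval p (MvPolynomial.pderiv (Sum.inl j) F) = 0}

/-- The locus `V₂* ⊆ 𝔸_ℂ^{n₁+n₂}` where all `∂F/∂y_j` vanish (case `R = 1`). -/
def V2starC (F : MvPolynomial (Fin n₁ ⊕ Fin n₂) ℂ) : Set (Fin n₁ ⊕ Fin n₂ → ℂ) :=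
  {p | ∀ j : Fin n₂, MvPolynomial.eval p (MvPolynomial.pderiv (Sum.inr j) F) = 0}

/-- Smoothness of the biprojective hypersurface `F = 0`: there is no point with
`x ≠ 0` and `y ≠ 0` on the hypersurface where the full complex gradient vanishes. -/
def SmoothXC (F : MvPolynomial (Fin n₁ ⊕ Fin n₂) ℂ) : Prop :=
  ¬ ∃ p : Fin n₁ ⊕ Fin n₂ → ℂ,
      (fun i => p (Sum.inl i)) ≠ 0 ∧ (fun j => p (Sum.inr j)) ≠ 0 ∧
      MvPolynomial.eval p F = 0 ∧
      ∀ j : Fin n₁ ⊕ Fin n₂, MvPolynomial.eval p (MvPolynomial.pderiv j F) = 0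



theorem natCast_mul_eq_mul_of_two_mul_abs_sub_le {q q' : ℕ} {a a' : ℤ} {x Δ : ℝ}
    (h : 2 * |(q : ℝ) * x - a| ≤ q * Δ) (h' : 2 * |(q' : ℝ) * x - a'| ≤ q' * Δ)
    (hlt : (q : ℝ) * q' * Δ < 1) :
    (q' : ℤ) * a = q * a' := by
  have hclose : |(((q' : ℤ) * a - q * a' : ℤ) : ℝ)| < 1 :=
    calc |(((q' : ℤ) * a - q * a' : ℤ) : ℝ)|
        = |(q : ℝ) * ((q' : ℝ) * x - a') - q' * ((q : ℝ) * x - a)| := by push_cast; ring_nf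
      _ ≤ q * |(q' : ℝ) * x - a'| + q' * |(q : ℝ) * x - a| := by
          refine (abs_sub _ _).trans_eq ?_
          simp only [abs_mul, Nat.abs_cast]
      _ ≤ q * q' * Δ := by
        nlinarith [(Nat.cast_nonneg q : (0 : ℝ) ≤ q), (Nat.cast_nonneg q' : (0 : ℝ) ≤ q')]
      _ < 1 := hlt
  have hzero := Int.abs_lt_one_iff.mp (by exact_mod_cast hclose)
  linarith

theorem Nat.dvd_of_forall_dvd_mul_of_coprime_gcd {ι : Type*} {s : Finset ι} {f : ι → ℕ}
    {q m : ℕ} (hq : q.Coprime (s.gcd f)) (h : ∀ i ∈ s, q ∣ m * f i) : q ∣ m := by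
  have hgcd : q ∣ s.gcd fun i => m * f i := Finset.dvd_gcd h
  rw [Finset.gcd_mul_left, normalize_eq] at hgcd
  exact hq.dvd_of_dvd_mul_right hgcd

theorem eq_of_natCast_mul_eq_mul_of_coprime {ι : Type*} [Fintype ι] {q q' : ℕ} {a a' : ι → ℤ}
    (hq : q ≠ 0) (hcop : q.Coprime (Finset.univ.gcd fun i => (a i).natAbs))
    (hcop' : q'.Coprime (Finset.univ.gcd fun i => (a' i).natAbs))
    (h : ∀ i, (q' : ℤ) * a i = q * a' i) :
    q = q' ∧ a = a' := by
  have hnat : ∀ i, q' * (a i).natAbs = q * (a' i).natAbs := fun i => by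
    simpa [Int.natAbs_mul] using congrArg Int.natAbs (h i)
  have hqq' : q = q' := Nat.dvd_antisymm
    (Nat.dvd_of_forall_dvd_mul_of_coprime_gcd hcop fun i _ => ⟨_, hnat i⟩)
    (Nat.dvd_of_forall_dvd_mul_of_coprime_gcd hcop' fun i _ => ⟨_, (hnat i).symm⟩)
  subst hqq'
  exact ⟨rfl, funext fun i => mul_left_cancel₀ (by exact_mod_cast hq) (h i)⟩

theorem rpow_mul_pow_sq_mul_rpow_mul_pow {P : ℝ} (hP : 0 < P) (m θ : ℝ) (R d₁ d₂ : ℕ) :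
    (P ^ ((R : ℝ) * θ * ((d₁ : ℝ) - 1)) * m ^ (R * d₂)) ^ 2 *
        (P ^ (-(d₁ : ℝ) + (R : ℝ) * θ * ((d₁ : ℝ) - 1)) * m ^ ((R - 1) * d₂)) =
      P ^ (-(d₁ : ℝ) + 3 * R * θ * ((d₁ : ℝ) - 1)) * m ^ ((3 * R - 1) * d₂) := by
  have hexp : (3 * R - 1) * d₂ = R * d₂ * 2 + (R - 1) * d₂ := by
    rw [show 3 * R - 1 = R * 2 + (R - 1) by omega, Nat.add_mul, mul_right_comm R 2 d₂]
  have hPpow : (P ^ ((R : ℝ) * θ * ((d₁ : ℝ) - 1))) ^ 2 *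
      P ^ (-(d₁ : ℝ) + (R : ℝ) * θ * ((d₁ : ℝ) - 1)) =
        P ^ (-(d₁ : ℝ) + 3 * R * θ * ((d₁ : ℝ) - 1)) := by
    rw [← Real.rpow_natCast, ← Real.rpow_mul hP.le, ← Real.rpow_add hP]
    congr 1
    push_cast
    ring
  have hmpow : (m ^ (R * d₂)) ^ 2 * m ^ ((R - 1) * d₂) = m ^ ((3 * R - 1) * d₂) := by
    rw [← pow_mul, ← pow_add, hexp]
  rw [← hPpow, ← hmpow]
  ring

theorem major_arcs_disjoint_general
    (n₂ R d₁ d₂ : ℕ)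
    (θ P₁ : ℝ) (hP₁ : 1 ≤ P₁)
    (y : Fin n₂ → ℤ)
    (hMA : P₁ ^ (-(d₁ : ℝ) + 3 * R * θ * ((d₁ : ℝ) - 1)) * mnorm y ^ ((3 * R - 1) * d₂) < 1) :
    ∀ (q q' : ℕ) (a a' : Fin R → ℤ),
      1 ≤ q → (q : ℝ) ≤ P₁ ^ ((R : ℝ) * θ * ((d₁ : ℝ) - 1)) * mnorm y ^ (R * d₂) →
      (∀ i, 0 ≤ a i ∧ a i < (q : ℤ)) →
      Nat.gcd q (Finset.univ.gcd fun i => (a i).natAbs) = 1 →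
      1 ≤ q' → (q' : ℝ) ≤ P₁ ^ ((R : ℝ) * θ * ((d₁ : ℝ) - 1)) * mnorm y ^ (R * d₂) →
      (∀ i, 0 ≤ a' i ∧ a' i < (q' : ℤ)) →
      Nat.gcd q' (Finset.univ.gcd fun i => (a' i).natAbs) = 1 →
      (q, a) ≠ (q', a') →
      majorArc' d₁ d₂ P₁ θ y q a ∩ majorArc' d₁ d₂ P₁ θ y q' a' = ∅ := by
  intro q q' a a' hq _ hqQ hcop _ hq'Q _ hcop' hne
  rw [Set.eq_empty_iff_forall_notMem]
  rintro α ⟨⟨-, hα⟩, ⟨-, hα'⟩⟩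
  simp only [mul_assoc (q : ℝ), mul_assoc (q' : ℝ)] at hα hα'
  have hlt : (q : ℝ) * q' * (P₁ ^ (-(d₁ : ℝ) + (R : ℝ) * θ * ((d₁ : ℝ) - 1)) *
      mnorm y ^ ((R - 1) * d₂)) < 1 := by
    refine lt_of_le_of_lt ?_ hMA
    rw [← rpow_mul_pow_sq_mul_rpow_mul_pow (by linarith) (mnorm y) θ R d₁ d₂, sq]
    have hy : 0 ≤ mnorm y := norm_nonneg _
    gcongr
  obtain ⟨rfl, rfl⟩ := eq_of_natCast_mul_eq_mul_of_coprime (by omega) hcop hcop'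
    fun i => natCast_mul_eq_mul_of_two_mul_abs_sub_le (hα i) (hα' i) hlt
  exact hne rfl

/-- **Lemma 7.1 (lem3.1).** Under the condition
`P₁^{−d₁+3Rθ(d₁−1)} |y|^{(3R−1)d₂} < 1`, the major arcs `𝔐'^y_{a,q}(θ)` are pairwise
disjoint. -/
theorem major_arcs_disjoint
    (n₁ n₂ R d₁ d₂ : ℕ) (hn₁ : 0 < n₁) (hn₂ : 0 < n₂) (hR : 0 < R)
    (F : Fin R → MvPolynomial (Fin n₁ ⊕ Fin n₂) ℤ)
    (hF : ∀ i, Bihomog d₁ d₂ (F i))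
    (θ P₁ : ℝ) (hθ0 : 0 < θ) (hθ1 : θ ≤ 1) (hP₁ : 1 ≤ P₁)
    (y : Fin n₂ → ℤ)
    (hMA : P₁ ^ (-(d₁ : ℝ) + 3 * R * θ * ((d₁ : ℝ) - 1)) * mnorm y ^ ((3 * R - 1) * d₂) < 1) :
    ∀ (q q' : ℕ) (a a' : Fin R → ℤ),
      1 ≤ q → (q : ℝ) ≤ P₁ ^ ((R : ℝ) * θ * ((d₁ : ℝ) - 1)) * mnorm y ^ (R * d₂) →
      (∀ i, 0 ≤ a i ∧ a i < (q : ℤ)) →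
      Nat.gcd q (Finset.univ.gcd fun i => (a i).natAbs) = 1 →
      1 ≤ q' → (q' : ℝ) ≤ P₁ ^ ((R : ℝ) * θ * ((d₁ : ℝ) - 1)) * mnorm y ^ (R * d₂) →
      (∀ i, 0 ≤ a' i ∧ a' i < (q' : ℤ)) →
      Nat.gcd q' (Finset.univ.gcd fun i => (a' i).natAbs) = 1 →
      (q, a) ≠ (q', a') →
      majorArc' d₁ d₂ P₁ θ y q a ∩ majorArc' d₁ d₂ P₁ θ y q' a' = ∅ :=
  major_arcs_disjoint_general n₂ R d₁ d₂ θ P₁ hP₁ y hMA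

end BiprojCM
end
end

section
/- Let h satisfy conditions (I) and (II). Fix μ with 0 < β₁μ < 1/2 satisfying μ(1 + νβ₁/β₂) ≤ ν/β₂ and μ(D − β₁ + 1 + δβ₁/β₂) < δ/(2β₂). Define T₁ = Σ_{l ≤ P^μ} Σ_{P^{1/2} < m^{β₂} ≤ P l^{−β₁}} h(l,m). Then there exist a real number B' and ϑ > 0 such that T₁ = β₁ C μ P log P + B' P + O(P^{1−ϑ}). -/
/-!
Write `S_l(M) = ∑_{m ≤ M} h(l, m)`. For `1 ≤ P` and `l ≤ P^μ` the inner range of `T₁` is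
`P^{1/(2β₂)} < m ≤ (P l^{-β₁})^{1/β₂}`, so `T₁` is a sum of differences of two row sums.
The lower row sums make up a box sum, which is `O(P^{μβ₁ + 1/2})` by (I). For the upper ones, `l`
is small against the row length, so (II) gives
`S_l = c₂(l) P l^{-β₁} + O(P^{1-δ/β₂} l^{D-β₁(1-δ/β₂)})`, and the conditions on `μ` make the sum
of these errors over `l ≤ P^μ` a power saving.

For the main term, dividing (I) by `M^{β₂}` and letting `M → ∞` with (II) gives
`∑_{l ≤ N} c₂(l) = C N^{β₁} + O(N^{β₁-δ})`. Partial summation turns this into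
`∑_{l ≤ N} c₂(l) l^{-β₁} = β₁ C log N + B + O(N^{-min(δ,1)})`, and `N = ⌊P^μ⌋` yields
`β₁ C μ P log P + B P`.
-/

open scoped BigOperators Pointwise
open MeasureTheory Filter Asymptotics

noncomputable section

open Finset Real Filter Asymptotics Topology

lemma sub_one_rpow_le {x p : ℝ} (hx : 1 ≤ x) (hp₀ : 0 ≤ p) (hp₁ : p ≤ 1) :
    (x - 1) ^ p ≤ x ^ p - p * x ^ (p - 1) := by
  have hx₀ : 0 < x := by linarith
  have hs : -1 ≤ -x⁻¹ := by linarith [inv_le_one_of_one_le₀ hx]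
  calc (x - 1) ^ p = x ^ p * (1 + -x⁻¹) ^ p := by
        rw [← mul_rpow hx₀.le (by linarith)]
        congr 1; field_simp; ring
    _ ≤ x ^ p * (1 + p * -x⁻¹) := by gcongr; exact rpow_one_add_le_one_add_mul_self hs hp₀ hp₁
    _ = x ^ p - p * x ^ (p - 1) := by rw [rpow_sub_one hx₀.ne']; ring

lemma rpow_le_mul_sub_rpow {x e : ℝ} (hx : 1 ≤ x) (he : -1 < e) :
    x ^ e ≤ max 1 (e + 1)⁻¹ * (x ^ (e + 1) - (x - 1) ^ (e + 1)) := by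
  have hx₀ : 0 < x := by linarith
  have hpos := rpow_pos_of_pos hx₀ e
  rcases le_or_gt 0 e with he₀ | he₀
  · have hgap : x ^ e ≤ x ^ (e + 1) - (x - 1) ^ (e + 1) := by
      have : (x - 1) ^ e ≤ x ^ e := rpow_le_rpow (by linarith) (by linarith) he₀
      rw [rpow_add_one' hx₀.le (by linarith), rpow_add_one' (by linarith) (by linarith)]
      nlinarith
    calc x ^ e ≤ 1 * (x ^ (e + 1) - (x - 1) ^ (e + 1)) := by linarith
      _ ≤ _ := by gcongr <;> [linarith; exact le_max_left _ _]
  · have hgap := sub_one_rpow_le hx (by linarith : 0 ≤ e + 1) (by linarith)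
    rw [add_sub_cancel_right] at hgap
    calc x ^ e = (e + 1)⁻¹ * ((e + 1) * x ^ e) := by field_simp [(by linarith : e + 1 ≠ 0)]
      _ ≤ (e + 1)⁻¹ * (x ^ (e + 1) - (x - 1) ^ (e + 1)) := by
        gcongr <;> [exact inv_nonneg.2 (by linarith); linarith]
      _ ≤ _ := by gcongr <;> [nlinarith; exact le_max_right _ _]

lemma sum_Icc_rpow_le {e : ℝ} (he : -1 < e) (N : ℕ) :
    ∑ l ∈ Icc 1 N, (l : ℝ) ^ e ≤ max 1 (e + 1)⁻¹ * (N : ℝ) ^ (e + 1) := by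
  induction N with
  | zero => simp [zero_rpow (by linarith : e + 1 ≠ 0)]
  | succ N ih =>
    rw [sum_Icc_succ_top (by omega)]
    have := rpow_le_mul_sub_rpow (x := (N + 1 : ℕ)) (by simp) he
    push_cast at this ⊢
    rw [add_sub_cancel_right] at this
    linarith

lemma mul_rpow_neg_one_sub_le {x d : ℝ} (hx : 1 ≤ x) (hd₀ : 0 ≤ d) (hd₁ : d ≤ 1) :
    d / 2 * x ^ (-1 - d) ≤ x ^ (-d) - (x + 1) ^ (-d) := by
  have hx₀ : 0 < x := by linarith
  have hgap := sub_one_rpow_le (by linarith : 1 ≤ x + 1) hd₀ hd₁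
  rw [add_sub_cancel_right, rpow_sub_one (by linarith)] at hgap
  have ha := rpow_pos_of_pos hx₀ d
  have hb := rpow_pos_of_pos (by linarith : 0 < x + 1) d
  rw [sub_eq_add_neg (-1), rpow_add hx₀, rpow_neg_one, rpow_neg hx₀.le, rpow_neg (by linarith)]
  have hstep : d / 2 * x⁻¹ * (x + 1) ^ d ≤ d * ((x + 1) ^ d / (x + 1)) := by
    rw [mul_div_assoc', le_div_iff₀ (by linarith)]
    calc d / 2 * x⁻¹ * (x + 1) ^ d * (x + 1) ≤ d / 2 * x⁻¹ * (x + 1) ^ d * (2 * x) := by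
          gcongr; linarith
      _ = d * (x + 1) ^ d := by field_simp
  calc d / 2 * (x⁻¹ * (x ^ d)⁻¹)
      = d / 2 * x⁻¹ * (x + 1) ^ d * ((x ^ d)⁻¹ * ((x + 1) ^ d)⁻¹) := by field_simp
    _ ≤ ((x + 1) ^ d - x ^ d) * ((x ^ d)⁻¹ * ((x + 1) ^ d)⁻¹) := by gcongr; linarith
    _ = (x ^ d)⁻¹ - ((x + 1) ^ d)⁻¹ := by field_simp

lemma sum_Ico_rpow_neg_one_sub_le {d : ℝ} (hd₀ : 0 < d) (hd₁ : d ≤ 1) {N : ℕ} (hN : 1 ≤ N)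
    (N' : ℕ) : ∑ l ∈ Ico N N', (l : ℝ) ^ (-1 - d) ≤ 2 / d * (N : ℝ) ^ (-d) := by
  rcases le_or_gt N N' with hNN' | hN'N
  · calc ∑ l ∈ Ico N N', (l : ℝ) ^ (-1 - d)
        ≤ ∑ l ∈ Ico N N', 2 / d * ((l : ℝ) ^ (-d) - ((l + 1 : ℕ) : ℝ) ^ (-d)) := by
          refine sum_le_sum fun l hl => ?_
          have hl : (1 : ℝ) ≤ l := by exact_mod_cast hN.trans (mem_Ico.1 hl).1
          have := mul_rpow_neg_one_sub_le hl hd₀.le hd₁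
          push_cast
          rw [div_mul_eq_mul_div, le_div_iff₀ hd₀]; linarith
      _ = 2 / d * ((N : ℝ) ^ (-d) - (N' : ℝ) ^ (-d)) := by
          rw [← mul_sum, sum_Ico_eq_sub _ hNN', sum_range_sub', sum_range_sub']; ring
      _ ≤ 2 / d * (N : ℝ) ^ (-d) := by
          gcongr; linarith [rpow_nonneg (Nat.cast_nonneg N') (-d)]
  · rw [Ico_eq_empty_of_le hN'N.le, sum_empty]; positivity

lemma isBigO_rpow_rpow_atTop {a b : ℝ} (hab : a ≤ b) :
    (fun x : ℝ => x ^ a) =O[atTop] fun x => x ^ b := by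
  refine IsBigO.of_bound 1 ((eventually_ge_atTop 1).mono fun x hx => ?_)
  rw [norm_of_nonneg (by positivity), norm_of_nonneg (by positivity), one_mul]
  exact rpow_le_rpow_of_exponent_le hx hab

lemma isBigO_natCast_rpow_rpow {a b : ℝ} (hab : a ≤ b) :
    (fun n : ℕ => (n : ℝ) ^ a) =O[atTop] fun n => (n : ℝ) ^ b :=
  (isBigO_rpow_rpow_atTop hab).comp_tendsto tendsto_natCast_atTop_atTop

lemma half_le_natFloor {x : ℝ} (hx : 1 ≤ x) : x / 2 ≤ ⌊x⌋₊ := by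
  have h₁ : (1 : ℝ) ≤ ⌊x⌋₊ := by exact_mod_cast Nat.le_floor (by exact_mod_cast hx)
  linarith [Nat.lt_floor_add_one x]

lemma isBigO_natFloor_rpow_neg {d : ℝ} (hd : 0 ≤ d) :
    (fun x : ℝ => (⌊x⌋₊ : ℝ) ^ (-d)) =O[atTop] fun x => x ^ (-d) := by
  refine IsBigO.of_bound (2 ^ d) ((eventually_ge_atTop 1).mono fun x hx => ?_)
  rw [norm_of_nonneg (by positivity), norm_of_nonneg (by positivity)]
  calc (⌊x⌋₊ : ℝ) ^ (-d) ≤ (x / 2) ^ (-d) :=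
        rpow_le_rpow_of_nonpos (by linarith) (half_le_natFloor hx) (by linarith)
    _ = 2 ^ d * x ^ (-d) := by
        rw [div_rpow (by linarith) zero_le_two, rpow_neg zero_le_two]; field_simp

lemma isBigO_log_natFloor_sub_log :
    (fun x : ℝ => log ⌊x⌋₊ - log x) =O[atTop] fun x => x⁻¹ := by
  refine IsBigO.of_bound 2 ((eventually_ge_atTop 1).mono fun x hx => ?_)
  have hfl := half_le_natFloor hx
  have hfl₀ : (0 : ℝ) < ⌊x⌋₊ := by linarith
  have hle : (⌊x⌋₊ : ℝ) ≤ x := Nat.floor_le (by linarith)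
  rw [Real.norm_eq_abs, norm_inv, Real.norm_eq_abs, abs_of_pos (by linarith : 0 < x),
    abs_sub_comm, abs_of_nonneg (sub_nonneg.2 (log_le_log hfl₀ hle)),
    ← log_div (by linarith) hfl₀.ne']
  calc log (x / ⌊x⌋₊) ≤ x / ⌊x⌋₊ - 1 := log_le_sub_one_of_pos (by positivity)
    _ = (x - ⌊x⌋₊) / ⌊x⌋₊ := by field_simp
    _ ≤ 1 / (x / 2) := by gcongr; linarith [Nat.lt_floor_add_one x]
    _ = 2 * x⁻¹ := by field_simp

lemma exists_abs_sub_le_of_abs_sub_le {g b : ℕ → ℝ} {N₀ : ℕ} (hb : Tendsto b atTop (𝓝 0))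
    (hg : ∀ N N', N₀ ≤ N → N ≤ N' → |g N' - g N| ≤ b N) :
    ∃ L, ∀ N, N₀ ≤ N → |g N - L| ≤ b N := by
  have hcauchy : CauchySeq g := by
    refine Metric.cauchySeq_iff'.2 fun ε hε => ?_
    obtain ⟨N, hN₀, hbN⟩ := ((eventually_ge_atTop N₀).and (hb.eventually (gt_mem_nhds hε))).exists
    exact ⟨N, fun N' hN' => (hg N N' hN₀ hN').trans_lt hbN⟩
  obtain ⟨L, hL⟩ := cauchySeq_tendsto_of_complete hcauchy
  refine ⟨L, fun N hN => ?_⟩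
  rw [abs_sub_comm]
  exact le_of_tendsto ((hL.sub_const (g N)).abs)
    (eventually_atTop.2 ⟨N, fun N' hN' => hg N N' hN hN'⟩)

lemma exists_isBigO_sum_range_sub {u : ℕ → ℝ} {d : ℝ} (hd₀ : 0 < d) (hd₁ : d ≤ 1)
    (hu : u =O[atTop] fun l : ℕ => (l : ℝ) ^ (-1 - d)) :
    ∃ S, (fun N : ℕ => ∑ l ∈ range N, u l - S) =O[atTop] fun N : ℕ => (N : ℝ) ^ (-d) := by
  obtain ⟨K, hK, hKu⟩ := hu.exists_nonneg
  obtain ⟨N₀, hN₀⟩ := eventually_atTop.1 (hKu.bound.and (eventually_ge_atTop 1))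
  have hb : Tendsto (fun N : ℕ => K * (2 / d) * (N : ℝ) ^ (-d)) atTop (𝓝 0) := by
    simpa using ((tendsto_rpow_neg_atTop hd₀).comp tendsto_natCast_atTop_atTop).const_mul
      (K * (2 / d))
  obtain ⟨S, hS⟩ := exists_abs_sub_le_of_abs_sub_le hb (g := fun N => ∑ l ∈ range N, u l)
    fun N N' hN hNN' => by
      rw [← sum_Ico_eq_sub _ hNN', mul_assoc]
      refine (abs_sum_le_sum_abs _ _).trans ?_
      calc ∑ l ∈ Ico N N', |u l| ≤ ∑ l ∈ Ico N N', K * (l : ℝ) ^ (-1 - d) := by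
            refine sum_le_sum fun l hl => ?_
            have := (hN₀ l (hN.trans (mem_Ico.1 hl).1)).1
            rwa [Real.norm_eq_abs, norm_of_nonneg (by positivity)] at this
        _ ≤ K * (2 / d * (N : ℝ) ^ (-d)) := by
            rw [← mul_sum]
            exact mul_le_mul_of_nonneg_left
              (sum_Ico_rpow_neg_one_sub_le hd₀ hd₁ (hN₀ N hN).2 N') hK
  refine ⟨S, IsBigO.of_bound (K * (2 / d)) (eventually_atTop.2 ⟨N₀, fun N hN => ?_⟩)⟩
  rw [norm_of_nonneg (by positivity : (0 : ℝ) ≤ (N : ℝ) ^ (-d)), Real.norm_eq_abs]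
  exact hS N hN

lemma sum_Icc_mul_by_parts (a f : ℕ → ℝ) (N : ℕ) :
    ∑ l ∈ Icc 1 N, a l * f l =
      (∑ l ∈ Icc 1 N, a l) * f N + ∑ l ∈ Ico 1 N, (∑ k ∈ Icc 1 l, a k) * (f l - f (l + 1)) := by
  induction N with
  | zero => simp
  | succ N ih =>
    rcases Nat.eq_zero_or_pos N with rfl | hN
    · simp
    · rw [sum_Icc_succ_top (by omega), sum_Icc_succ_top (by omega), sum_Ico_succ_top hN, ih]
      ring

lemma log_one_add_inv_mem_Icc {x : ℝ} (hx : 0 < x) : log (1 + x⁻¹) ∈ Set.Icc 0 x⁻¹ :=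
  ⟨log_nonneg (by linarith [inv_pos.2 hx]),
    (log_le_sub_one_of_pos (by positivity)).trans_eq (by ring)⟩

lemma sum_Ico_log_one_add_inv {N : ℕ} (hN : 1 ≤ N) :
    ∑ l ∈ Ico 1 N, log (1 + (l : ℝ)⁻¹) = log N := by
  have hstep : ∀ l ∈ Ico 1 N, log (1 + (l : ℝ)⁻¹) = log ((l + 1 : ℕ) : ℝ) - log (l : ℝ) := by
    intro l hl
    have hl : (0 : ℝ) < l := by exact_mod_cast (mem_Ico.1 hl).1
    rw [← log_div (by positivity) hl.ne']
    congr 1; push_cast; field_simp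
  rw [sum_congr rfl hstep, sum_Ico_eq_sub _ hN, sum_range_sub (fun k : ℕ => log (k : ℝ)),
    sum_range_sub (fun k : ℕ => log (k : ℝ))]
  simp

lemma add_one_rpow_neg_eq {β x : ℝ} (hx : 0 < x) :
    (x + 1) ^ (-β) = x ^ (-β) * exp (-(β * log (1 + x⁻¹))) := by
  rw [show x + 1 = x * (1 + x⁻¹) by field_simp, mul_rpow hx.le (by positivity),
    rpow_def_of_pos (by positivity : 0 < 1 + x⁻¹)]
  ring_nf

lemma rpow_neg_sub_add_one_rpow_neg_mem_Icc {β x : ℝ} (hβ : 0 ≤ β) (hx : 0 < x) :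
    x ^ (-β) - (x + 1) ^ (-β) ∈ Set.Icc 0 (β * x ^ (-β - 1)) := by
  obtain ⟨ht₀, ht₁⟩ := log_one_add_inv_mem_Icc hx
  have hexp : exp (-(β * log (1 + x⁻¹))) ≤ 1 := exp_le_one_iff.2 (by nlinarith)
  have hlin := add_one_le_exp (-(β * log (1 + x⁻¹)))
  have hpos := rpow_pos_of_pos hx (-β)
  rw [add_one_rpow_neg_eq hx, rpow_sub_one hx.ne']
  constructor
  · nlinarith
  · calc x ^ (-β) - x ^ (-β) * exp (-(β * log (1 + x⁻¹)))
        = x ^ (-β) * (1 - exp (-(β * log (1 + x⁻¹)))) := by ring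
      _ ≤ x ^ (-β) * (β * x⁻¹) := by gcongr; nlinarith
      _ = β * (x ^ (-β) / x) := by ring

lemma abs_rpow_mul_sub_sub_log_le {β x : ℝ} (hβ : 0 ≤ β) (hβx : β ≤ x) (hx : 0 < x) :
    |x ^ β * (x ^ (-β) - (x + 1) ^ (-β)) - β * log (1 + x⁻¹)| ≤ β ^ 2 * x ^ (-2 : ℝ) := by
  obtain ⟨ht₀, ht₁⟩ := log_one_add_inv_mem_Icc hx
  set t := log (1 + x⁻¹)
  have hβt : β * t ≤ 1 :=
    calc β * t ≤ x * x⁻¹ := by gcongr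
      _ = 1 := mul_inv_cancel₀ hx.ne'
  have hcancel : x ^ β * x ^ (-β) = 1 := by rw [← rpow_add hx]; simp
  calc |x ^ β * (x ^ (-β) - (x + 1) ^ (-β)) - β * t|
      = |exp (-(β * t)) - 1 - -(β * t)| := by
        rw [add_one_rpow_neg_eq hx, ← abs_neg]
        congr 1
        linear_combination (exp (-(β * t)) - 1) * hcancel
    _ ≤ (-(β * t)) ^ 2 :=
        abs_exp_sub_one_sub_id_le (by rw [abs_neg, abs_of_nonneg (by positivity)]; exact hβt)
    _ ≤ (β * x⁻¹) ^ 2 := by rw [neg_sq]; gcongr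
    _ = β ^ 2 * x ^ (-2 : ℝ) := by rw [rpow_neg hx.le, rpow_two]; ring

lemma isBigO_rpow_neg_sub_add_one_rpow_neg {β : ℝ} (hβ : 0 ≤ β) :
    (fun l : ℕ => (l : ℝ) ^ (-β) - ((l : ℝ) + 1) ^ (-β)) =O[atTop]
      fun l : ℕ => (l : ℝ) ^ (-β - 1) := by
  refine IsBigO.of_bound β ((eventually_ge_atTop 1).mono fun l hl => ?_)
  obtain ⟨h₀, h₁⟩ := rpow_neg_sub_add_one_rpow_neg_mem_Icc hβ (x := l) (by exact_mod_cast hl)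
  rw [norm_of_nonneg h₀, norm_of_nonneg (by positivity)]
  exact h₁

lemma isBigO_rpow_mul_sub_sub_log {β : ℝ} (hβ : 0 ≤ β) :
    (fun l : ℕ => (l : ℝ) ^ β * ((l : ℝ) ^ (-β) - ((l : ℝ) + 1) ^ (-β)) -
      β * log (1 + (l : ℝ)⁻¹)) =O[atTop] fun l : ℕ => (l : ℝ) ^ (-2 : ℝ) := by
  refine IsBigO.of_bound (β ^ 2) ((eventually_ge_atTop (⌈β⌉₊ + 1)).mono fun l hl => ?_)
  have hβl : β ≤ l := (Nat.le_ceil β).trans (by exact_mod_cast (Nat.le_succ _).trans hl)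
  rw [Real.norm_eq_abs, norm_of_nonneg (by positivity)]
  exact abs_rpow_mul_sub_sub_log_le hβ hβl (by exact_mod_cast (Nat.succ_pos _).trans_le hl)

theorem exists_isBigO_sum_mul_rpow_neg_sub_log {a : ℕ → ℝ} {C β δ : ℝ} (hβ : 0 < β)
    (hδ : 0 < δ) (ha : (fun N : ℕ => ∑ l ∈ Icc 1 N, a l - C * (N : ℝ) ^ β) =O[atTop]
      fun N : ℕ => (N : ℝ) ^ (β - δ)) :
    ∃ B, (fun N : ℕ => ∑ l ∈ Icc 1 N, a l * (l : ℝ) ^ (-β) - β * C * log N - B) =O[atTop]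
      fun N : ℕ => (N : ℝ) ^ (-min δ 1) := by
  have hΔ := isBigO_rpow_neg_sub_add_one_rpow_neg hβ.le
  have hr := isBigO_rpow_mul_sub_sub_log hβ.le
  set d := min δ 1
  have hd₀ : 0 < d := lt_min hδ one_pos
  set E : ℕ → ℝ := fun N => ∑ l ∈ Icc 1 N, a l - C * (N : ℝ) ^ β
  set Δ : ℕ → ℝ := fun l => (l : ℝ) ^ (-β) - ((l : ℝ) + 1) ^ (-β)
  set r : ℕ → ℝ := fun l => (l : ℝ) ^ β * Δ l - β * log (1 + (l : ℝ)⁻¹)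
  -- Summing by parts against `A l = C l ^ β + E l` leaves, besides `β C log N`, the series
  -- `∑ (C r l + E l Δ l)`, whose terms are `O(l⁻²) + O(l ^ (-1 - δ))`.
  set u : ℕ → ℝ := fun l => C * r l + E l * Δ l
  have hEΔ : (fun l => E l * Δ l) =O[atTop] fun l : ℕ => (l : ℝ) ^ (-1 - δ) := by
    refine (ha.mul hΔ).congr' EventuallyEq.rfl ((eventually_ge_atTop 1).mono fun l hl => ?_)
    have hl : (0 : ℝ) < l := by exact_mod_cast hl
    simp only [← rpow_add hl]; ring_nf
  have hu : u =O[atTop] fun l : ℕ => (l : ℝ) ^ (-1 - d) :=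
    ((hr.const_mul_left C).trans (isBigO_natCast_rpow_rpow (by linarith [min_le_right δ 1]))).add
      (hEΔ.trans (isBigO_natCast_rpow_rpow (by linarith [min_le_left δ 1])))
  obtain ⟨S, hS⟩ := exists_isBigO_sum_range_sub hd₀ (min_le_right _ _) hu
  have hEf : (fun N : ℕ => E N * (N : ℝ) ^ (-β)) =O[atTop] fun N : ℕ => (N : ℝ) ^ (-d) := by
    refine ((ha.mul (isBigO_refl _ _)).congr' EventuallyEq.rfl
      ((eventually_ge_atTop 1).mono fun N hN => ?_)).trans
      (isBigO_natCast_rpow_rpow (neg_le_neg (min_le_left δ 1)))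
    have hN : (0 : ℝ) < N := by exact_mod_cast hN
    simp only [← rpow_add hN]; ring_nf
  refine ⟨C + S - u 0, (hEf.add hS).congr' ?_ EventuallyEq.rfl⟩
  filter_upwards [eventually_ge_atTop 1] with N hN
  have hsplit : ∀ l ∈ Ico 1 N, (∑ k ∈ Icc 1 l, a k) * ((l : ℝ) ^ (-β) - ((l + 1 : ℕ) : ℝ) ^ (-β))
      = β * C * log (1 + (l : ℝ)⁻¹) + u l := by
    intro l hl
    simp only [u, r, E, Δ]; push_cast; ring
  have hIco : ∑ l ∈ Ico 1 N, (β * C * log (1 + (l : ℝ)⁻¹) + u l)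
      = β * C * log N + (∑ l ∈ range N, u l - u 0) := by
    rw [sum_add_distrib, ← mul_sum, sum_Ico_log_one_add_inv hN, sum_Ico_eq_sub _ hN, sum_range_one]
  have hNβ : (N : ℝ) ^ β * (N : ℝ) ^ (-β) = 1 := by
    rw [← rpow_add (by exact_mod_cast hN)]; simp
  rw [sum_Icc_mul_by_parts, sum_congr rfl hsplit, hIco]
  simp only [E]; linear_combination -C * hNβ

def IsPowerSaving (a : ℝ) (f : ℝ → ℝ) : Prop :=
  ∃ ϑ > 0, f =O[atTop] fun P => P ^ (a - ϑ)

namespace IsPowerSaving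

variable {a : ℝ} {f g : ℝ → ℝ}

lemma add (hf : IsPowerSaving a f) (hg : IsPowerSaving a g) :
    IsPowerSaving a fun P => f P + g P := by
  obtain ⟨ϑ, hϑ, hf⟩ := hf
  obtain ⟨ϑ', hϑ', hg⟩ := hg
  exact ⟨min ϑ ϑ', lt_min hϑ hϑ',
    (hf.trans (isBigO_rpow_rpow_atTop (by linarith [min_le_left ϑ ϑ']))).add
      (hg.trans (isBigO_rpow_rpow_atTop (by linarith [min_le_right ϑ ϑ'])))⟩

lemma neg (hf : IsPowerSaving a f) : IsPowerSaving a fun P => -f P :=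
  let ⟨ϑ, hϑ, hf⟩ := hf
  ⟨ϑ, hϑ, hf.neg_left⟩

lemma sub (hf : IsPowerSaving a f) (hg : IsPowerSaving a g) :
    IsPowerSaving a fun P => f P - g P := by
  simpa only [sub_eq_add_neg] using hf.add hg.neg

lemma id_mul (hf : IsPowerSaving a f) : IsPowerSaving (a + 1) fun P => P * f P := by
  obtain ⟨ϑ, hϑ, hf⟩ := hf
  refine ⟨ϑ, hϑ, ((isBigO_refl id atTop).mul hf).congr' EventuallyEq.rfl ?_⟩
  filter_upwards [eventually_gt_atTop 0] with P hP
  rw [id, show a + 1 - ϑ = 1 + (a - ϑ) by ring, rpow_add hP, rpow_one]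

lemma congr' (hf : IsPowerSaving a f) (h : f =ᶠ[atTop] g) : IsPowerSaving a g :=
  let ⟨ϑ, hϑ, hf⟩ := hf
  ⟨ϑ, hϑ, hf.congr' h EventuallyEq.rfl⟩

end IsPowerSaving

lemma tsum_ite_lt_rpow_le_eq_sub (f : ℕ → ℝ) {a b β : ℝ} (ha : 0 ≤ a) (hab : a ≤ b)
    (hβ : 0 < β) :
    ∑' m : ℕ, (if a < (m : ℝ) ^ β ∧ (m : ℝ) ^ β ≤ b then f m else 0) =
      ∑ m ∈ Icc 1 ⌊b ^ (1 / β)⌋₊, f m - ∑ m ∈ Icc 1 ⌊a ^ (1 / β)⌋₊, f m := by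
  have hmem : ∀ m : ℕ, (a < (m : ℝ) ^ β ∧ (m : ℝ) ^ β ≤ b) ↔
      m ∈ Ioc ⌊a ^ (1 / β)⌋₊ ⌊b ^ (1 / β)⌋₊ := fun m => by
    rw [mem_Ioc, Nat.floor_lt (rpow_nonneg ha _), Nat.le_floor_iff (rpow_nonneg (ha.trans hab) _),
      one_div, rpow_inv_lt_iff_of_pos ha (Nat.cast_nonneg m) hβ,
      le_rpow_inv_iff_of_pos (Nat.cast_nonneg m) (ha.trans hab) hβ]
  have hIcc : ∀ n : ℕ, Icc 1 n = Ioc 0 n := fun n => Icc_add_one_left_eq_Ioc 0 n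
  rw [tsum_eq_sum fun m hm => if_neg fun hm' => hm ((hmem m).1 hm'),
    sum_congr rfl fun m hm => if_pos ((hmem m).2 hm), eq_sub_iff_add_eq', hIcc, hIcc,
    sum_Ioc_consecutive _ (Nat.zero_le _)
      (Nat.floor_le_floor (rpow_le_rpow ha hab (by positivity)))]

namespace BiprojCM

def CondIIRight (h : ℕ → ℕ → ℝ) (δ β₂ ν D : ℝ) (c₂ : ℕ → ℝ) : Prop :=
  ∃ K > (0 : ℝ), ∀ (M : ℝ) (l : ℕ), 1 ≤ M → 1 ≤ l → (l : ℝ) ≤ M ^ ν →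
    |(∑ m ∈ Finset.Icc 1 ⌊M⌋₊, h l m) - c₂ l * M ^ β₂| ≤ K * (l : ℝ) ^ D * M ^ (β₂ - δ)

section

variable {h : ℕ → ℕ → ℝ} {C δ β₁ β₂ ν D : ℝ} {c₂ : ℕ → ℝ}

lemma CondIIRight.tendsto_sum_div_rpow (hII : CondIIRight h δ β₂ ν D c₂) (hδ : 0 < δ)
    (hν : 0 < ν) {l : ℕ} (hl : 1 ≤ l) :
    Tendsto (fun M : ℝ => (∑ m ∈ Icc 1 ⌊M⌋₊, h l m) / M ^ β₂) atTop (𝓝 (c₂ l)) := by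
  obtain ⟨K, -, hK⟩ := hII
  have hlim : Tendsto (fun M : ℝ => K * (l : ℝ) ^ D * M ^ (-δ)) atTop (𝓝 0) := by
    simpa using (tendsto_rpow_neg_atTop hδ).const_mul (K * (l : ℝ) ^ D)
  refine tendsto_iff_norm_sub_tendsto_zero.2
    (squeeze_zero' (Eventually.of_forall fun _ => norm_nonneg _) ?_ hlim)
  filter_upwards [eventually_ge_atTop 1, (tendsto_rpow_atTop hν).eventually_ge_atTop (l : ℝ)]
    with M hM hlM
  have hMβ : 0 < M ^ β₂ := by positivity
  rw [Real.norm_eq_abs, ← mul_div_cancel_right₀ (c₂ l) hMβ.ne', ← sub_div, abs_div,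
    abs_of_pos hMβ, div_le_iff₀ hMβ]
  calc _ ≤ K * (l : ℝ) ^ D * M ^ (β₂ - δ) := hK M l hM hl hlM
    _ = K * (l : ℝ) ^ D * M ^ (-δ) * M ^ β₂ := by
        rw [sub_eq_neg_add, rpow_add (by linarith)]; ring

lemma isBigO_sum_c₂ (hI : CondI h C δ β₁ β₂) (hII : CondIIRight h δ β₂ ν D c₂) (hδ : 0 < δ)
    (hν : 0 < ν) :
    (fun N : ℕ => ∑ l ∈ Icc 1 N, c₂ l - C * (N : ℝ) ^ β₁) =O[atTop]
      fun N : ℕ => (N : ℝ) ^ (β₁ - δ) := by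
  obtain ⟨K, -, hK⟩ := hI
  refine IsBigO.of_bound K ((eventually_ge_atTop 1).mono fun N hN => ?_)
  have hN₀ : (1 : ℝ) ≤ N := by exact_mod_cast hN
  have hlim : Tendsto (fun M : ℝ => (∑ l ∈ Icc 1 N, ∑ m ∈ Icc 1 ⌊M⌋₊, h l m) / M ^ β₂)
      atTop (𝓝 (∑ l ∈ Icc 1 N, c₂ l)) :=
    (tendsto_finsetSum _ fun l hl => hII.tendsto_sum_div_rpow hδ hν (mem_Icc.1 hl).1).congr
      fun M => (sum_div _ _ _).symm
  rw [Real.norm_eq_abs, norm_of_nonneg (by positivity)]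
  refine le_of_tendsto ((hlim.sub_const _).abs) ?_
  filter_upwards [eventually_ge_atTop (N : ℝ)] with M hM
  have hM₀ : 0 < M ^ β₂ := rpow_pos_of_pos (by linarith) _
  have hbound := hK N M hN₀ (hN₀.trans hM)
  rw [Nat.floor_natCast, min_eq_left hM] at hbound
  rw [← mul_div_cancel_right₀ (C * (N : ℝ) ^ β₁) hM₀.ne', ← sub_div, abs_div, abs_of_pos hM₀,
    div_le_iff₀ hM₀]
  calc _ ≤ K * (N : ℝ) ^ β₁ * M ^ β₂ * (N : ℝ) ^ (-δ) := hbound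
    _ = K * (N : ℝ) ^ (β₁ - δ) * M ^ β₂ := by
        rw [sub_eq_add_neg, rpow_add (by linarith)]; ring

lemma exists_isPowerSaving_main_term
    (hc : (fun N : ℕ => ∑ l ∈ Icc 1 N, c₂ l - C * (N : ℝ) ^ β₁) =O[atTop]
      fun N : ℕ => (N : ℝ) ^ (β₁ - δ))
    (hβ₁ : 0 < β₁) (hδ : 0 < δ) {μ : ℝ} (hμ : 0 < μ) :
    ∃ B, IsPowerSaving 1 fun P => ∑ l ∈ Icc 1 ⌊P ^ μ⌋₊, c₂ l * (P * (l : ℝ) ^ (-β₁)) -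
      (β₁ * C * μ * P * log P + B * P) := by
  obtain ⟨B, hB⟩ := exists_isBigO_sum_mul_rpow_neg_sub_log hβ₁ hδ hc
  have hfloor := (tendsto_nat_floor_atTop (α := ℝ)).comp (tendsto_rpow_atTop hμ)
  have hsum : (fun P : ℝ => ∑ l ∈ Icc 1 ⌊P ^ μ⌋₊, c₂ l * (l : ℝ) ^ (-β₁) -
      β₁ * C * log ⌊P ^ μ⌋₊ - B) =O[atTop] fun P : ℝ => P ^ (0 - μ * min δ 1) := by
    refine ((hB.comp_tendsto hfloor).trans ((isBigO_natFloor_rpow_neg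
      (le_min hδ.le zero_le_one)).comp_tendsto (tendsto_rpow_atTop hμ))).congr' EventuallyEq.rfl ?_
    filter_upwards [eventually_ge_atTop 0] with P hP
    simp [← rpow_mul hP]
  have hlog : (fun P : ℝ => β₁ * C * (log ⌊P ^ μ⌋₊ - μ * log P)) =O[atTop]
      fun P : ℝ => P ^ (0 - μ) := by
    refine ((isBigO_log_natFloor_sub_log.comp_tendsto (tendsto_rpow_atTop hμ)).const_mul_left
      (β₁ * C)).congr' ?_ ?_
    · filter_upwards [eventually_gt_atTop 0] with P hP
      simp [log_rpow hP]
    · filter_upwards [eventually_gt_atTop 0] with P hP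
      simp [← rpow_neg_one, ← rpow_mul hP.le]
  have h0 : IsPowerSaving 0 fun P => ∑ l ∈ Icc 1 ⌊P ^ μ⌋₊, c₂ l * (l : ℝ) ^ (-β₁) -
      β₁ * C * μ * log P - B :=
    (IsPowerSaving.add ⟨_, mul_pos hμ (lt_min hδ one_pos), hsum⟩ ⟨_, hμ, hlog⟩).congr'
      (Eventually.of_forall fun P => by ring)
  refine ⟨B, (zero_add (1 : ℝ) ▸ h0.id_mul).congr' (Eventually.of_forall fun P => ?_)⟩
  simp only [mul_sub, mul_sum]
  ring_nf

lemma isPowerSaving_lower (hI : CondI h C δ β₁ β₂) (hδ : 0 ≤ δ) (hβ₂ : 0 < β₂) {μ : ℝ}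
    (hμ : 0 ≤ μ) (hμhalf : β₁ * μ < 1 / 2) :
    IsPowerSaving 1 fun P => ∑ l ∈ Icc 1 ⌊P ^ μ⌋₊,
      ∑ m ∈ Icc 1 ⌊(P ^ ((1 : ℝ) / 2)) ^ (1 / β₂)⌋₊, h l m := by
  obtain ⟨K, hK₀, hK⟩ := hI
  refine ⟨1 / 2 - β₁ * μ, by linarith, IsBigO.of_bound (K + |C|)
    ((eventually_ge_atTop 1).mono fun P hP => ?_)⟩
  set L := P ^ μ
  set M := (P ^ ((1 : ℝ) / 2)) ^ (1 / β₂)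
  have hL : 1 ≤ L := one_le_rpow hP hμ
  have hM : 1 ≤ M := one_le_rpow (one_le_rpow hP (by norm_num)) (by positivity)
  have hmin : (min L M) ^ (-δ) ≤ 1 :=
    rpow_le_one_of_one_le_of_nonpos (le_min hL hM) (by linarith)
  have hsize : L ^ β₁ * M ^ β₂ = P ^ (1 - (1 / 2 - β₁ * μ)) := by
    rw [← rpow_mul (by positivity), ← rpow_mul (by positivity), ← rpow_mul (by positivity),
      ← rpow_add (by positivity)]
    congr 1; field_simp; ring
  have hLM : 0 ≤ L ^ β₁ * M ^ β₂ := by positivity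
  rw [Real.norm_eq_abs, norm_of_nonneg (by positivity), ← hsize]
  calc |∑ l ∈ Icc 1 ⌊L⌋₊, ∑ m ∈ Icc 1 ⌊M⌋₊, h l m|
      ≤ |∑ l ∈ Icc 1 ⌊L⌋₊, ∑ m ∈ Icc 1 ⌊M⌋₊, h l m - C * L ^ β₁ * M ^ β₂| +
        |C * L ^ β₁ * M ^ β₂| := sub_le_iff_le_add.1 (abs_sub_abs_le_abs_sub _ _)
    _ ≤ K * L ^ β₁ * M ^ β₂ * 1 + |C| * (L ^ β₁ * M ^ β₂) := by
        gcongr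
        · exact (hK L M hL hM).trans (by gcongr)
        · rw [mul_assoc, abs_mul, abs_of_nonneg hLM]
    _ = (K + |C|) * (L ^ β₁ * M ^ β₂) := by ring

lemma abs_sum_upper_sub_le {K μ : ℝ}
    (hK : ∀ (M : ℝ) (l : ℕ), 1 ≤ M → 1 ≤ l → (l : ℝ) ≤ M ^ ν →
      |(∑ m ∈ Icc 1 ⌊M⌋₊, h l m) - c₂ l * M ^ β₂| ≤ K * (l : ℝ) ^ D * M ^ (β₂ - δ))
    (hβ₁ : 0 ≤ β₁) (hβ₂ : 0 < β₂) (hν : 0 ≤ ν) (hμ : β₁ * μ ≤ 1)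
    (hμ1 : μ * (1 + ν * β₁ / β₂) ≤ ν / β₂) {P : ℝ} (hP : 1 ≤ P) {l : ℕ} (hl : 1 ≤ l)
    (hlP : (l : ℝ) ≤ P ^ μ) :
    |∑ m ∈ Icc 1 ⌊(P * (l : ℝ) ^ (-β₁)) ^ (1 / β₂)⌋₊, h l m - c₂ l * (P * (l : ℝ) ^ (-β₁))| ≤
      K * P ^ (1 - δ / β₂) * (l : ℝ) ^ (D - β₁ * (1 - δ / β₂)) := by
  have hl₀ : (0 : ℝ) < l := by exact_mod_cast hl
  have hP₀ : 0 < P := by linarith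
  set X := P * (l : ℝ) ^ (-β₁)
  have hX : P ^ (1 - β₁ * μ) ≤ X :=
    calc P ^ (1 - β₁ * μ) = P * (P ^ μ) ^ (-β₁) := by
          rw [← rpow_mul hP₀.le, sub_eq_add_neg, rpow_add hP₀, rpow_one]; ring_nf
      _ ≤ X := mul_le_mul_of_nonneg_left (rpow_le_rpow_of_nonpos hl₀ hlP (by linarith)) hP₀.le
  have hX₁ : 1 ≤ X := (one_le_rpow hP (by linarith)).trans hX
  set M := X ^ (1 / β₂)
  have hMpow : ∀ s, M ^ s = X ^ (s / β₂) := fun s => by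
    rw [← rpow_mul (by linarith)]; ring_nf
  have hlM : (l : ℝ) ≤ M ^ ν := by
    have hexp : μ ≤ (1 - β₁ * μ) * (ν / β₂) := by
      have : (1 - β₁ * μ) * (ν / β₂) - μ = ν / β₂ - μ * (1 + ν * β₁ / β₂) := by ring
      linarith
    calc (l : ℝ) ≤ P ^ μ := hlP
      _ ≤ P ^ ((1 - β₁ * μ) * (ν / β₂)) := rpow_le_rpow_of_exponent_le hP hexp
      _ = (P ^ (1 - β₁ * μ)) ^ (ν / β₂) := rpow_mul hP₀.le _ _
      _ ≤ M ^ ν := by rw [hMpow]; gcongr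
  have hbound := hK M l (one_le_rpow hX₁ (by positivity)) hl hlM
  rw [hMpow, div_self hβ₂.ne', rpow_one, hMpow] at hbound
  calc _ ≤ K * (l : ℝ) ^ D * X ^ ((β₂ - δ) / β₂) := hbound
    _ = K * P ^ (1 - δ / β₂) * (l : ℝ) ^ (D - β₁ * (1 - δ / β₂)) := by
        rw [show (β₂ - δ) / β₂ = 1 - δ / β₂ by field_simp, mul_rpow hP₀.le (by positivity),
          ← rpow_mul hl₀.le, sub_eq_add_neg D, rpow_add hl₀]
        ring_nf

lemma isPowerSaving_upper (hII : CondIIRight h δ β₂ ν D c₂) (hδ : 0 < δ) (hβ₁ : 0 ≤ β₁)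
    (hβ₂ : 0 < β₂) (hν : 0 ≤ ν) {μ : ℝ} (hμ : 0 < μ) (hμhalf : β₁ * μ < 1 / 2)
    (hμ1 : μ * (1 + ν * β₁ / β₂) ≤ ν / β₂)
    (hμ2 : μ * (D - β₁ + 1 + δ * β₁ / β₂) < δ / (2 * β₂)) :
    IsPowerSaving 1 fun P => ∑ l ∈ Icc 1 ⌊P ^ μ⌋₊,
      (∑ m ∈ Icc 1 ⌊(P * (l : ℝ) ^ (-β₁)) ^ (1 / β₂)⌋₊, h l m - c₂ l * (P * (l : ℝ) ^ (-β₁))) := by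
  obtain ⟨K, hK₀, hK⟩ := hII
  set q := δ / β₂
  set e := D - β₁ * (1 - q)
  -- Raising `e` above `-1` makes `sum_Icc_rpow_le` applicable; by `hμ2` the saving survives.
  set e' := max e (q / (2 * μ) - 1)
  have hq : 0 < q := div_pos hδ hβ₂
  have he' : -1 < e' := lt_max_of_lt_right (by linarith [div_pos hq (mul_pos two_pos hμ)])
  have hsave : μ * (e' + 1) < q := by
    rcases max_cases e (q / (2 * μ) - 1) with ⟨he, -⟩ | ⟨he, -⟩
    · have : μ * (e + 1) = μ * (D - β₁ + 1 + δ * β₁ / β₂) := by ring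
      have : q / 2 = δ / (2 * β₂) := by ring
      simp only [e', he]; linarith
    · simp only [e', he]; field_simp; linarith
  refine ⟨q - μ * (e' + 1), by linarith, IsBigO.of_bound (K * max 1 (e' + 1)⁻¹)
    ((eventually_ge_atTop 1).mono fun P hP => ?_)⟩
  have hP₀ : 0 < P := by linarith
  rw [Real.norm_eq_abs, norm_of_nonneg (by positivity)]
  have hN : (⌊P ^ μ⌋₊ : ℝ) ≤ P ^ μ := Nat.floor_le (by positivity)
  calc _ ≤ ∑ l ∈ Icc 1 ⌊P ^ μ⌋₊, K * P ^ (1 - q) * (l : ℝ) ^ e' := by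
        refine (abs_sum_le_sum_abs _ _).trans (sum_le_sum fun l hl => ?_)
        obtain ⟨hl₁, hlN⟩ := mem_Icc.1 hl
        have hl : (1 : ℝ) ≤ l := by exact_mod_cast hl₁
        refine (abs_sum_upper_sub_le hK hβ₁ hβ₂ hν (by linarith) hμ1 hP hl₁
          (le_trans (by exact_mod_cast hlN) hN)).trans ?_
        gcongr
        exact le_max_left _ _
    _ = K * P ^ (1 - q) * ∑ l ∈ Icc 1 ⌊P ^ μ⌋₊, (l : ℝ) ^ e' := by rw [mul_sum]
    _ ≤ K * P ^ (1 - q) * (max 1 (e' + 1)⁻¹ * (P ^ μ) ^ (e' + 1)) := by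
        gcongr
        exact (sum_Icc_rpow_le he' _).trans (by gcongr; linarith)
    _ = K * max 1 (e' + 1)⁻¹ * P ^ (1 - (q - μ * (e' + 1))) := by
        rw [← rpow_mul hP₀.le, show 1 - (q - μ * (e' + 1)) = (1 - q) + μ * (e' + 1) by ring,
          rpow_add hP₀]
        ring

lemma T1_eq_sum_sub_sum {μ P : ℝ} (hβ₁ : 0 ≤ β₁) (hβ₂ : 0 < β₂) (hμ : β₁ * μ ≤ 1 / 2)
    (hP : 1 ≤ P) :
    T1 h β₁ β₂ μ P = ∑ l ∈ Icc 1 ⌊P ^ μ⌋₊,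
      (∑ m ∈ Icc 1 ⌊(P * (l : ℝ) ^ (-β₁)) ^ (1 / β₂)⌋₊, h l m -
        ∑ m ∈ Icc 1 ⌊(P ^ ((1 : ℝ) / 2)) ^ (1 / β₂)⌋₊, h l m) := by
  have hP₀ : 0 < P := by linarith
  refine sum_congr rfl fun l hl => tsum_ite_lt_rpow_le_eq_sub _ (rpow_nonneg hP₀.le _) ?_ hβ₂
  have hl₀ : (0 : ℝ) < l := by exact_mod_cast (mem_Icc.1 hl).1
  have hlP : (l : ℝ) ≤ P ^ μ :=
    (Nat.cast_le.2 (mem_Icc.1 hl).2).trans (Nat.floor_le (by positivity))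
  calc P ^ ((1 : ℝ) / 2) = P * P ^ (-(1 / 2) : ℝ) := by
        rw [← rpow_one_add' hP₀.le (by norm_num)]; norm_num
    _ ≤ P * (P ^ μ) ^ (-β₁) := by
        rw [← rpow_mul hP₀.le]
        exact mul_le_mul_of_nonneg_left (rpow_le_rpow_of_exponent_le hP (by linarith)) hP₀.le
    _ ≤ P * (l : ℝ) ^ (-β₁) :=
        mul_le_mul_of_nonneg_left (rpow_le_rpow_of_nonpos hl₀ hlP (by linarith)) hP₀.le

end

theorem T1_asymptotic_general
    (h : ℕ → ℕ → ℝ)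
    (C δ β₁ β₂ ν D : ℝ) (hδ : 0 < δ) (hβ₁ : 0 < β₁) (hβ₂ : 0 < β₂)
    (hν : 0 < ν)
    (c₁ c₂ : ℕ → ℝ)
    (hI : CondI h C δ β₁ β₂) (hII : CondII h δ β₁ β₂ ν D c₁ c₂)
    (μ : ℝ) (hμ0 : 0 < β₁ * μ) (hμhalf : β₁ * μ < 1 / 2)
    (hμ1 : μ * (1 + ν * β₁ / β₂) ≤ ν / β₂)
    (hμ2 : μ * (D - β₁ + 1 + δ * β₁ / β₂) < δ / (2 * β₂)) :
    ∃ B' : ℝ, ∃ ϑ > (0 : ℝ),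
      (fun P : ℝ => T1 h β₁ β₂ μ P - (β₁ * C * μ * P * Real.log P + B' * P)) =O[atTop]
        fun P : ℝ => P ^ ((1 : ℝ) - ϑ) := by
  have hμ : 0 < μ := pos_of_mul_pos_right hμ0 hβ₁.le
  obtain ⟨B, hmain⟩ := exists_isPowerSaving_main_term (isBigO_sum_c₂ hI hII.2 hδ hν) hβ₁ hδ hμ
  have hupper := isPowerSaving_upper hII.2 hδ hβ₁.le hβ₂ hν.le hμ hμhalf hμ1 hμ2
  have hlower := isPowerSaving_lower hI hδ.le hβ₂ hμ.le hμhalf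
  refine ⟨B, ((hupper.add hmain).sub hlower).congr' ?_⟩
  filter_upwards [eventually_ge_atTop 1] with P hP
  rw [T1_eq_sum_sub_sum hβ₁.le hβ₂ hμhalf.le hP, sum_sub_distrib, sum_sub_distrib]
  ring

/-- **Lemma 9.3 (lem6b).** Asymptotic evaluation of the sum `T₁`. -/
theorem T1_asymptotic
    (h : ℕ → ℕ → ℝ) (hpos : ∀ l m, 0 ≤ h l m)
    (C δ β₁ β₂ ν D : ℝ) (hδ : 0 < δ) (hβ₁ : 0 < β₁) (hβ₂ : 0 < β₂)
    (hν : 0 < ν) (hD : 0 ≤ D)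
    (c₁ c₂ : ℕ → ℝ) (hc₁ : ∀ m, 0 ≤ c₁ m) (hc₂ : ∀ l, 0 ≤ c₂ l)
    (hI : CondI h C δ β₁ β₂) (hII : CondII h δ β₁ β₂ ν D c₁ c₂)
    (μ : ℝ) (hμ0 : 0 < β₁ * μ) (hμhalf : β₁ * μ < 1 / 2)
    (hμ1 : μ * (1 + ν * β₁ / β₂) ≤ ν / β₂)
    (hμ2 : μ * (D - β₁ + 1 + δ * β₁ / β₂) < δ / (2 * β₂)) :
    ∃ B' : ℝ, ∃ ϑ > (0 : ℝ),
      (fun P : ℝ => T1 h β₁ β₂ μ P - (β₁ * C * μ * P * Real.log P + B' * P)) =O[atTop]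
        fun P : ℝ => P ^ ((1 : ℝ) - ϑ) :=
  T1_asymptotic_general h C δ β₁ β₂ ν D hδ hβ₁ hβ₂ hν c₁ c₂ hI hII μ hμ0 hμhalf hμ1 hμ2

end BiprojCM

end
end
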